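/- arXiv:1401.7195 — 3 statements merged into one kernel-verified Lean document; each statement's English description precedes it below -/
import Mathlib

section
/- The function X ↦ ln det(I_N + (Y - H X)ᵀ C⁻¹ (Y - H X)) over n×N real matrices X attains its global minimum at X = (Hᵀ C⁻¹ H)⁻¹ Hᵀ C⁻¹ Y, when H has full column rank and C is symmetric positive definite. -/
/-!
The normal equations make the residual `R₀ = Y - H X̂` `C⁻¹`-orthogonal to the column space of
`H`, so for every `X` the weighted Gram matrix of the residual splits as
`(Y - H X)ᵀ C⁻¹ (Y - H X) = R₀ᵀ C⁻¹ R₀ + (H (X̂ - X))ᵀ C⁻¹ (H (X̂ - X))`.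
Hence `X̂` minimises the residual Gram matrix in the Loewner order, and `log ∘ det` is monotone on
positive definite matrices: writing `B = √A (1 + M) √A` with `M ⪰ 0` reduces `det A ≤ det B` to
`det (1 + M) ≥ 1`, a product of eigenvalues `1 + λᵢ ≥ 1`.
-/

open Matrix
open scoped MatrixOrder

namespace Matrix

variable {m n ι : Type*}

theorem PosSemidef.one_le_det_one_add [Fintype n] [DecidableEq n] {B : Matrix n n ℝ}
    (hB : B.PosSemidef) : 1 ≤ (1 + B).det := by
  set U := hB.1.eigenvectorUnitary
  have hconj : 1 + B =
      (U : Matrix n n ℝ) * diagonal (fun i => 1 + hB.1.eigenvalues i) * star U := by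
    conv_lhs => rw [hB.1.spectral_theorem, ← map_one (Unitary.conjStarAlgAut ℝ _ U), ← map_add]
    rw [Unitary.conjStarAlgAut_apply, ← diagonal_one, diagonal_add]
    rfl
  rw [hconj, det_conj_of_mul_eq_one (Unitary.coe_mul_star_self U) (Unitary.coe_star_mul_self U),
    det_diagonal]
  exact Finset.one_le_prod fun i _ => le_add_of_nonneg_right (hB.eigenvalues_nonneg i)

theorem PosDef.det_le_det_of_le [Fintype n] [DecidableEq n] {A B : Matrix n n ℝ}
    (hA : A.PosDef) (hAB : A ≤ B) : A.det ≤ B.det := by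
  set T := CFC.sqrt A
  have hT : T.PosSemidef := nonneg_iff_posSemidef.mp (CFC.sqrt_nonneg A)
  have hTT : T * T = A := CFC.sqrt_mul_sqrt_self A hA.posSemidef.nonneg
  have hTdet : IsUnit T.det := isUnit_iff_ne_zero.2 fun h => by
    simpa [← hTT, h] using hA.det_pos
  set M := T⁻¹ * (B - A) * T⁻¹
  have hM : M.PosSemidef := by
    simpa only [hT.inv.1.eq] using (le_iff.mp hAB).conjTranspose_mul_mul_same T⁻¹
  have hB : B = T * (1 + M) * T := by
    simp only [M, Matrix.mul_add, Matrix.add_mul, Matrix.mul_one, hTT, ← Matrix.mul_assoc,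
      mul_nonsing_inv T hTdet, Matrix.one_mul]
    rw [Matrix.mul_assoc, nonsing_inv_mul T hTdet, Matrix.mul_one]
    abel
  calc A.det = T.det * 1 * T.det := by rw [mul_one, ← det_mul, hTT]
    _ ≤ T.det * (1 + M).det * T.det := by
      gcongr
      · exact hT.det_nonneg
      · exact hT.det_nonneg
      · exact hM.one_le_det_one_add
    _ = B.det := by rw [hB, det_mul, det_mul]

theorem mulVec_injective_of_rank_eq_card {K : Type*} [Field K] [Fintype n] {H : Matrix m n K}
    (h : H.rank = Fintype.card n) : Function.Injective H.mulVec := by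
  rw [mulVec_injective_iff, linearIndependent_iff_card_eq_finrank_span, Set.finrank,
    ← rank_eq_finrank_span_cols, h]

theorem PosSemidef.transpose_mul_mul_same [Fintype m] [Finite n] {W : Matrix m m ℝ} (hW : W.PosSemidef)
    (B : Matrix m n ℝ) : (Bᵀ * W * B).PosSemidef := by
  simpa only [conjTranspose_eq_transpose_of_trivial] using hW.conjTranspose_mul_mul_same B

theorem PosDef.transpose_mul_mul_same [Fintype m] [Fintype n] {W : Matrix m m ℝ}
    (hW : W.PosDef) {B : Matrix m n ℝ} (hB : Function.Injective B.mulVec) :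
    (Bᵀ * W * B).PosDef := by
  simpa only [conjTranspose_eq_transpose_of_trivial] using hW.conjTranspose_mul_mul_same hB

section LeastSquares

variable {R : Type*} [CommRing R] [Fintype m] [Fintype n]

noncomputable def weightedLeastSquares [DecidableEq n] (H : Matrix m n R) (W : Matrix m m R)
    (Y : Matrix m ι R) : Matrix n ι R :=
  (Hᵀ * W * H)⁻¹ * (Hᵀ * W * Y)

theorem transpose_mul_mul_sub_mul_weightedLeastSquares [DecidableEq n] {H : Matrix m n R}
    {W : Matrix m m R} (hG : IsUnit (Hᵀ * W * H).det) (Y : Matrix m ι R) :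
    Hᵀ * W * (Y - H * weightedLeastSquares H W Y) = 0 := by
  have hHX : Hᵀ * W * (H * weightedLeastSquares H W Y) = Hᵀ * W * Y := by
    rw [weightedLeastSquares, ← Matrix.mul_assoc, ← Matrix.mul_assoc, mul_nonsing_inv _ hG,
      Matrix.one_mul]
  rw [Matrix.mul_sub, hHX, sub_self]

theorem transpose_mul_mul_add_mul_of_orthogonal {W : Matrix m m R} (hW : Wᵀ = W)
    {H : Matrix m n R} {E : Matrix m ι R} (hE : Hᵀ * W * E = 0) (D : Matrix n ι R) :
    (E + H * D)ᵀ * W * (E + H * D) = Eᵀ * W * E + (H * D)ᵀ * W * (H * D) := by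
  have hcross : (H * D)ᵀ * W * E = 0 := by
    rw [transpose_mul, Matrix.mul_assoc, Matrix.mul_assoc, ← Matrix.mul_assoc Hᵀ, hE,
      Matrix.mul_zero]
  have hcross' : Eᵀ * W * (H * D) = 0 := by
    simpa only [transpose_mul, transpose_transpose, hW, transpose_zero, Matrix.mul_assoc] using
      congrArg transpose hcross
  simp only [transpose_add, Matrix.add_mul, Matrix.mul_add, hcross, hcross']
  abel

end LeastSquares

theorem residual_gram_weightedLeastSquares_le [Fintype m] [Fintype n] [Finite ι] [DecidableEq n]
    {W : Matrix m m ℝ} (hW : W.PosDef) {H : Matrix m n ℝ} (hH : Function.Injective H.mulVec)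
    (Y : Matrix m ι ℝ) (X : Matrix n ι ℝ) :
    (Y - H * weightedLeastSquares H W Y)ᵀ * W * (Y - H * weightedLeastSquares H W Y) ≤
      (Y - H * X)ᵀ * W * (Y - H * X) := by
  have hE : Hᵀ * W * (Y - H * weightedLeastSquares H W Y) = 0 :=
    transpose_mul_mul_sub_mul_weightedLeastSquares
      (hW.transpose_mul_mul_same hH).det_pos.ne'.isUnit Y
  have hsplit : Y - H * X =
      (Y - H * weightedLeastSquares H W Y) + H * (weightedLeastSquares H W Y - X) := by
    rw [Matrix.mul_sub, sub_add_sub_cancel]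
  have hWt : Wᵀ = W := by simpa only [conjTranspose_eq_transpose_of_trivial] using hW.1.eq
  rw [le_iff, hsplit, transpose_mul_mul_add_mul_of_orthogonal hWt hE, add_sub_cancel_left]
  exact hW.posSemidef.transpose_mul_mul_same _

end Matrix

/-- The function `X ↦ log det (I_N + (Y - HX)ᵀ C⁻¹ (Y - HX))` attains its global
minimum at the weighted least-squares estimate `X̂ = (Hᵀ C⁻¹ H)⁻¹ Hᵀ C⁻¹ Y`,
when `H` has full column rank and `C` is symmetric positive definite. -/
theorem stmt_5 {m n N : ℕ} (Y : Matrix (Fin m) (Fin N) ℝ)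
    (H : Matrix (Fin m) (Fin n) ℝ) (hH : H.rank = n)
    (C : Matrix (Fin m) (Fin m) ℝ) (hC : C.PosDef) :
    ∀ X : Matrix (Fin n) (Fin N) ℝ,
      Real.log (1 + (Y - H * ((Hᵀ * C⁻¹ * H)⁻¹ * (Hᵀ * C⁻¹ * Y)))ᵀ * C⁻¹ *
          (Y - H * ((Hᵀ * C⁻¹ * H)⁻¹ * (Hᵀ * C⁻¹ * Y)))).det ≤
        Real.log (1 + (Y - H * X)ᵀ * C⁻¹ * (Y - H * X)).det := by
  intro X
  have hH' : Function.Injective H.mulVec :=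
    mulVec_injective_of_rank_eq_card (by rw [hH, Fintype.card_fin])
  have hle := residual_gram_weightedLeastSquares_le hC.inv hH' Y X
  have hpos : (1 + (Y - H * weightedLeastSquares H C⁻¹ Y)ᵀ * C⁻¹ *
      (Y - H * weightedLeastSquares H C⁻¹ Y)).PosDef :=
    PosDef.one.add_posSemidef (hC.inv.posSemidef.transpose_mul_mul_same _)
  exact Real.log_le_log hpos.det_pos (hpos.det_le_det_of_le (add_le_add_right hle 1))
end

section
/- Fixed-point characterization: X* is a stationary point of V(X) = (γ_w/2) ln det(I_N + (Y-HX)ᵀ C_w⁻¹ (Y-HX)) + (γ_x/2) ln det(I_N + (X-U)ᵀ C_x⁻¹ (X-U)) if and only if X* = (Hᵀ R̂(X*)⁻¹ H + P̂(X*)⁻¹)⁻¹ (Hᵀ R̂(X*)⁻¹ Y + P̂(X*)⁻¹ U), where P̂(X) = (1/γ_x)(C_x + (X-U)(X-U)ᵀ) and R̂(X) = (1/γ_w)(C_w + (Y-HX)(Y-HX)ᵀ). -/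
/-!
By Jacobi's formula `d log det A = tr (A⁻¹ dA)`, moving `X` in the direction `G` changes
`log det (1 + (X - U)ᵀ C⁻¹ (X - U))` at rate `2 tr (Gᵀ C⁻¹ (X - U) (1 + (X - U)ᵀ C⁻¹ (X - U))⁻¹)`,
and the push-through identity `C⁻¹ D (1 + Dᵀ C⁻¹ D)⁻¹ = (C + D Dᵀ)⁻¹ D` rewrites the gradient of
`V` as `P̂⁻¹ (X - U) - Hᵀ R̂⁻¹ (Y - H X)`. This vanishes exactly when
`(Hᵀ R̂⁻¹ H + P̂⁻¹) X = Hᵀ R̂⁻¹ Y + P̂⁻¹ U`, and `Hᵀ R̂⁻¹ H + P̂⁻¹` is positive definite.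
-/

open Matrix Finset

namespace Matrix

variable {n : Type*} [Fintype n] [DecidableEq n]

theorem sum_det_updateCol_eq_trace_adjugate_mul {R : Type*} [CommRing R] (A B : Matrix n n R) :
    ∑ i, (A.updateCol i (fun k => B k i)).det = (adjugate A * B).trace := by
  simp only [← cramer_apply, cramer_eq_adjugate_mulVec, trace, diag, mul_apply, mulVec,
    dotProduct]

theorem det_updateCol_eq_sum_perm {R : Type*} [CommRing R] (A : Matrix n n R) (i : n)
    (b : n → R) :
    (A.updateCol i b).det = ∑ σ : Equiv.Perm n,
      (Equiv.Perm.sign σ : R) * ((∏ j ∈ univ.erase i, A (σ j) j) * b (σ i)) := by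
  refine (det_apply' _).trans (sum_congr rfl fun σ _ => ?_)
  rw [← mul_prod_erase univ _ (mem_univ i), updateCol_self, mul_comm (b (σ i))]
  congr 2
  exact prod_congr rfl fun j hj => updateCol_ne (ne_of_mem_erase hj)

theorem hasDerivAt_det {𝕜 : Type*} [NontriviallyNormedField 𝕜] {M : 𝕜 → Matrix n n 𝕜}
    {M' : Matrix n n 𝕜} {x : 𝕜} (hM : ∀ i j, HasDerivAt (fun s => M s i j) (M' i j) x) :
    HasDerivAt (fun s => (M s).det) (adjugate (M x) * M').trace x := by
  have hLeibniz := HasDerivAt.fun_sum (u := univ) fun σ _ =>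
    (HasDerivAt.fun_finsetProd (u := univ) fun i _ => hM (σ i) i).const_mul
      (Equiv.Perm.sign σ : 𝕜)
  rw [← sum_det_updateCol_eq_trace_adjugate_mul,
    show (fun s => (M s).det) = _ from funext fun s => det_apply' (M s)]
  refine hLeibniz.congr_deriv ?_
  simp only [det_updateCol_eq_sum_perm, smul_eq_mul, mul_sum]
  exact sum_comm

theorem hasDerivAt_log_det {M : ℝ → Matrix n n ℝ} {M' : Matrix n n ℝ} {x : ℝ}
    (hM : ∀ i j, HasDerivAt (fun s => M s i j) (M' i j) x) (hdet : (M x).det ≠ 0) :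
    HasDerivAt (fun s => Real.log (M s).det) ((M x)⁻¹ * M').trace x := by
  refine ((hasDerivAt_det hM).log hdet).congr_deriv ?_
  rw [inv_def, smul_mul, trace_smul, smul_eq_mul, Ring.inverse_eq_inv', div_eq_inv_mul]

theorem hasDerivAt_log_det_add_smul_add_sq_smul (A B C : Matrix n n ℝ) (hA : A.det ≠ 0) :
    HasDerivAt (fun s : ℝ => Real.log (A + s • B + s ^ 2 • C).det) (A⁻¹ * B).trace 0 := by
  have hentry (i j : n) : HasDerivAt (fun s : ℝ => (A + s • B + s ^ 2 • C) i j) (B i j) 0 := by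
    simpa using (((hasDerivAt_id (0 : ℝ)).mul_const (B i j)).const_add (A i j)).fun_add
      (((hasDerivAt_id (0 : ℝ)).pow 2).mul_const (C i j))
  simpa using hasDerivAt_log_det hentry (by simpa using hA)

variable {m : Type*} [Fintype m]

theorem PosSemidef.one_add_transpose_mul_mul {W : Matrix m m ℝ} (hW : W.PosSemidef)
    (E : Matrix m n ℝ) : (1 + Eᵀ * W * E).PosDef :=
  PosDef.one.add_posSemidef (by simpa using hW.conjTranspose_mul_mul_same E)

omit [DecidableEq n] in
theorem PosDef.add_mul_transpose_self {C : Matrix m m ℝ} (hC : C.PosDef) (E : Matrix m n ℝ) :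
    (C + E * Eᵀ).PosDef :=
  hC.add_posSemidef (by simpa using posSemidef_self_mul_conjTranspose E)

theorem hasDerivAt_log_det_one_add_transpose_mul_mul (E G : Matrix m n ℝ) {W : Matrix m m ℝ}
    (hW : W.PosSemidef) :
    HasDerivAt (fun s : ℝ => Real.log (1 + (E + s • G)ᵀ * W * (E + s • G)).det)
      (2 * (Gᵀ * W * E * (1 + Eᵀ * W * E)⁻¹).trace) 0 := by
  have hexpand (s : ℝ) : 1 + (E + s • G)ᵀ * W * (E + s • G)
      = 1 + Eᵀ * W * E + s • (Gᵀ * W * E + Eᵀ * W * G) + s ^ 2 • (Gᵀ * W * G) := by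
    simp only [transpose_add, transpose_smul, Matrix.add_mul, Matrix.mul_add, Matrix.smul_mul,
      Matrix.mul_smul, smul_add, smul_smul, ← sq]
    abel
  have hA := hW.one_add_transpose_mul_mul E
  have hAinv : (1 + Eᵀ * W * E)⁻¹ᵀ = (1 + Eᵀ * W * E)⁻¹ := by
    rw [transpose_nonsing_inv, ← conjTranspose_eq_transpose_of_trivial, hA.isHermitian.eq]
  have hWt : Wᵀ = W := by rw [← conjTranspose_eq_transpose_of_trivial, hW.isHermitian.eq]
  have hsymm : ((1 + Eᵀ * W * E)⁻¹ * (Eᵀ * W * G)).trace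
      = (Gᵀ * W * E * (1 + Eᵀ * W * E)⁻¹).trace := by
    rw [← trace_transpose]
    simp only [transpose_mul, transpose_transpose, hAinv, hWt]
    simp only [Matrix.mul_assoc]
  simp only [hexpand]
  refine (hasDerivAt_log_det_add_smul_add_sq_smul _ _ _ hA.det_pos.ne').congr_deriv ?_
  rw [Matrix.mul_add, trace_add, hsymm, trace_mul_comm]
  ring

omit [Fintype n] [DecidableEq n] in
theorem eq_inv_mul_iff_mul_eq {K : Type*} [Field K] [DecidableEq m] {A : Matrix m m K}
    (hA : IsUnit A.det) (X B : Matrix m n K) : X = A⁻¹ * B ↔ A * X = B :=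
  ⟨fun h => by rw [h, mul_nonsing_inv_cancel_left _ _ hA],
    fun h => by rw [← h, nonsing_inv_mul_cancel_left _ _ hA]⟩

theorem inv_add_mul_mul_eq_inv_mul_mul_inv_one_add {K : Type*} [Field K] [DecidableEq m]
    {C : Matrix m m K} (U : Matrix m n K) (V : Matrix n m K)
    (hC : IsUnit C.det) (hT : IsUnit (1 + V * C⁻¹ * U).det) :
    (C + U * V)⁻¹ * U = C⁻¹ * U * (1 + V * C⁻¹ * U)⁻¹ := by
  have hCUV : IsUnit (C + U * V).det := by
    rw [det_add_mul U V hC]; exact hC.mul hT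
  have hpush : (C + U * V) * (C⁻¹ * U) = U * (1 + V * C⁻¹ * U) := by
    rw [Matrix.add_mul, mul_nonsing_inv_cancel_left _ _ hC, Matrix.mul_add, Matrix.mul_one]
    simp only [Matrix.mul_assoc]
  rw [← nonsing_inv_mul_cancel_left _ (C⁻¹ * U * _) hCUV, ← Matrix.mul_assoc (C + U * V),
    hpush, Matrix.mul_assoc, mul_nonsing_inv _ hT, Matrix.mul_one]

theorem hasDerivAt_mul_log_det_one_add_single {p : Type*} [Fintype p] [DecidableEq p]
    [DecidableEq m] {γ : ℝ} (hγ : γ ≠ 0) {C : Matrix m m ℝ} (hC : C.PosDef) (E : Matrix m n ℝ)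
    (P : Matrix m p ℝ) (i : p) (t : n) :
    HasDerivAt (fun s : ℝ => γ / 2 * Real.log
        (1 + (E + s • (P * single i t (1 : ℝ)))ᵀ * C⁻¹ * (E + s • (P * single i t (1 : ℝ)))).det)
      ((Pᵀ * (γ⁻¹ • (C + E * Eᵀ))⁻¹ * E) i t) 0 := by
  have hW := hC.inv.posSemidef
  refine ((hasDerivAt_log_det_one_add_transpose_mul_mul E _ hW).const_mul (γ / 2)).congr_deriv ?_
  have : Invertible γ⁻¹ := invertibleOfNonzero (inv_ne_zero hγ)
  rw [Matrix.inv_smul _ γ⁻¹ (hC.add_mul_transpose_self E).det_pos.ne'.isUnit, invOf_eq_inv, inv_inv,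
    Matrix.mul_smul, Matrix.smul_mul, smul_apply, Matrix.mul_assoc Pᵀ,
    inv_add_mul_mul_eq_inv_mul_mul_inv_one_add E Eᵀ hC.det_pos.ne'.isUnit
      (hW.one_add_transpose_mul_mul E).det_pos.ne'.isUnit,
    transpose_mul, transpose_single]
  simp only [Matrix.mul_assoc, trace_single_mul, smul_eq_mul]
  ring

end Matrix

theorem forall_hasDerivAt_eq_zero_iff {ι κ : Type*} {f : ι → κ → ℝ → ℝ} {G : Matrix ι κ ℝ} {x : ℝ}
    (hf : ∀ i j, HasDerivAt (f i j) (G i j) x) : (∀ i j, HasDerivAt (f i j) 0 x) ↔ G = 0 :=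
  ⟨fun h => ext fun i j => (hf i j).unique (h i j), fun h i j => by simpa [h] using hf i j⟩

theorem hasDerivAt_cost_add_smul_single {m n N : Type*} [Fintype m] [Fintype n] [Fintype N]
    [DecidableEq m] [DecidableEq n] [DecidableEq N] (Y : Matrix m N ℝ) (H : Matrix m n ℝ)
    (U : Matrix n N ℝ) {Cx : Matrix n n ℝ} (hCx : Cx.PosDef) {Cw : Matrix m m ℝ} (hCw : Cw.PosDef)
    {γx γw : ℝ} (hγx : γx ≠ 0) (hγw : γw ≠ 0) (X : Matrix n N ℝ) (i : n) (t : N) :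
    HasDerivAt
      (fun s : ℝ =>
        γw / 2 * Real.log (1 + (Y - H * (X + s • single i t (1 : ℝ)))ᵀ * Cw⁻¹ *
            (Y - H * (X + s • single i t (1 : ℝ)))).det +
        γx / 2 * Real.log (1 + ((X + s • single i t (1 : ℝ)) - U)ᵀ * Cx⁻¹ *
            ((X + s • single i t (1 : ℝ)) - U)).det)
      (((γx⁻¹ • (Cx + (X - U) * (X - U)ᵀ))⁻¹ * (X - U)
        - Hᵀ * (γw⁻¹ • (Cw + (Y - H * X) * (Y - H * X)ᵀ))⁻¹ * (Y - H * X)) i t) 0 := by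
  have hw_path (s : ℝ) : Y - H * (X + s • single i t (1 : ℝ))
      = Y - H * X + s • (-H * single i t (1 : ℝ)) := by
    rw [Matrix.mul_add, Matrix.mul_smul, Matrix.neg_mul, smul_neg]; abel
  have hx_path (s : ℝ) : X + s • single i t (1 : ℝ) - U
      = X - U + s • ((1 : Matrix n n ℝ) * single i t (1 : ℝ)) := by
    rw [Matrix.one_mul]; abel
  simp only [hw_path, hx_path]
  refine ((hasDerivAt_mul_log_det_one_add_single hγw hCw (Y - H * X) (-H) i t).fun_add
    (hasDerivAt_mul_log_det_one_add_single hγx hCx (X - U) 1 i t)).congr_deriv ?_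
  rw [transpose_neg, transpose_one, Matrix.neg_mul, Matrix.neg_mul, Matrix.one_mul,
    ← Matrix.add_apply, neg_add_eq_sub]

theorem stmt_16_general {m n N : ℕ} (Y : Matrix (Fin m) (Fin N) ℝ)
    (H : Matrix (Fin m) (Fin n) ℝ) (U : Matrix (Fin n) (Fin N) ℝ)
    (Cx : Matrix (Fin n) (Fin n) ℝ) (hCx : Cx.PosDef)
    (Cw : Matrix (Fin m) (Fin m) ℝ) (hCw : Cw.PosDef)
    (γx γw : ℝ) (hγx : 0 < γx) (hγw : 0 < γw)
    (Xs : Matrix (Fin n) (Fin N) ℝ) :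
    (∀ (i : Fin n) (t : Fin N),
      HasDerivAt
        (fun s : ℝ =>
          γw / 2 *
            Real.log (1 + (Y - H * (Xs + s • Matrix.single i t (1 : ℝ)))ᵀ * Cw⁻¹ *
              (Y - H * (Xs + s • Matrix.single i t (1 : ℝ)))).det +
          γx / 2 *
            Real.log (1 + ((Xs + s • Matrix.single i t (1 : ℝ)) - U)ᵀ * Cx⁻¹ *
              ((Xs + s • Matrix.single i t (1 : ℝ)) - U)).det)
        0 0) ↔
    Xs = (Hᵀ * (γw⁻¹ • (Cw + (Y - H * Xs) * (Y - H * Xs)ᵀ))⁻¹ * H +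
            (γx⁻¹ • (Cx + (Xs - U) * (Xs - U)ᵀ))⁻¹)⁻¹ *
          (Hᵀ * (γw⁻¹ • (Cw + (Y - H * Xs) * (Y - H * Xs)ᵀ))⁻¹ * Y +
            (γx⁻¹ • (Cx + (Xs - U) * (Xs - U)ᵀ))⁻¹ * U) := by
  rw [forall_hasDerivAt_eq_zero_iff
    (hasDerivAt_cost_add_smul_single Y H U hCx hCw hγx.ne' hγw.ne' Xs)]
  set R := γw⁻¹ • (Cw + (Y - H * Xs) * (Y - H * Xs)ᵀ)
  set P := γx⁻¹ • (Cx + (Xs - U) * (Xs - U)ᵀ)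
  have hR : R.PosDef := (hCw.add_mul_transpose_self _).smul (inv_pos.2 hγw)
  have hP : P.PosDef := (hCx.add_mul_transpose_self _).smul (inv_pos.2 hγx)
  have hS : (Hᵀ * R⁻¹ * H + P⁻¹).PosDef :=
    PosDef.posSemidef_add (by simpa using hR.inv.posSemidef.conjTranspose_mul_mul_same H) hP.inv
  have hgrad : P⁻¹ * (Xs - U) - Hᵀ * R⁻¹ * (Y - H * Xs)
      = (Hᵀ * R⁻¹ * H + P⁻¹) * Xs - (Hᵀ * R⁻¹ * Y + P⁻¹ * U) := by
    simp only [Matrix.mul_sub, Matrix.add_mul, Matrix.mul_assoc]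
    abel
  rw [hgrad, sub_eq_zero, eq_inv_mul_iff_mul_eq hS.det_pos.ne'.isUnit]

/-- Fixed-point characterization: `X*` is a stationary point of the concentrated
cost `V` iff it satisfies the CMAP fixed-point equation
`X* = (Hᵀ R̂(X*)⁻¹ H + P̂(X*)⁻¹)⁻¹ (Hᵀ R̂(X*)⁻¹ Y + P̂(X*)⁻¹ U)`, where
`P̂(X) = (1/γ_x)(C_x + (X-U)(X-U)ᵀ)` and `R̂(X) = (1/γ_w)(C_w + (Y-HX)(Y-HX)ᵀ)`. -/
theorem stmt_16 {m n N : ℕ} (Y : Matrix (Fin m) (Fin N) ℝ)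
    (H : Matrix (Fin m) (Fin n) ℝ) (hH : H.rank = n)
    (U : Matrix (Fin n) (Fin N) ℝ)
    (Cx : Matrix (Fin n) (Fin n) ℝ) (hCx : Cx.PosDef)
    (Cw : Matrix (Fin m) (Fin m) ℝ) (hCw : Cw.PosDef)
    (γx γw : ℝ) (hγx : 0 < γx) (hγw : 0 < γw)
    (Xs : Matrix (Fin n) (Fin N) ℝ) :
    (∀ (i : Fin n) (t : Fin N),
      HasDerivAt
        (fun s : ℝ =>
          γw / 2 *
            Real.log (1 + (Y - H * (Xs + s • Matrix.single i t (1 : ℝ)))ᵀ * Cw⁻¹ *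
              (Y - H * (Xs + s • Matrix.single i t (1 : ℝ)))).det +
          γx / 2 *
            Real.log (1 + ((Xs + s • Matrix.single i t (1 : ℝ)) - U)ᵀ * Cx⁻¹ *
              ((Xs + s • Matrix.single i t (1 : ℝ)) - U)).det)
        0 0) ↔
    Xs = (Hᵀ * (γw⁻¹ • (Cw + (Y - H * Xs) * (Y - H * Xs)ᵀ))⁻¹ * H +
            (γx⁻¹ • (Cx + (Xs - U) * (Xs - U)ᵀ))⁻¹)⁻¹ *
          (Hᵀ * (γw⁻¹ • (Cw + (Y - H * Xs) * (Y - H * Xs)ᵀ))⁻¹ * Y +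
            (γx⁻¹ • (Cx + (Xs - U) * (Xs - U)ᵀ))⁻¹ * U) :=
  stmt_16_general Y H U Cx hCx Cw hCw γx γw hγx hγw Xs
end

section
/- Positive definiteness of the variational covariance parameter: if C_x is n×n symmetric positive definite, P̃ is n×n symmetric positive semidefinite, N ≥ 1, and Ũ, U are n×N real matrices, then C̃_x = C_x + N P̃ + N Ũ Ũᵀ - Ũ Uᵀ - U Ũᵀ + U Uᵀ is symmetric positive definite, provided N ≥ 1. -/
/-!
The cross terms complete a square: `c • A Aᵀ - A Bᵀ - B Aᵀ + B Bᵀ = (A - B)(A - B)ᵀ + (c - 1) • A Aᵀ`,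
a sum of Gram matrices with nonnegative weights once `c ≥ 1`. Adding this positive semidefinite matrix
and `N • P̃` to the positive definite `C_x` keeps it positive definite.
-/

open Matrix

namespace Matrix

variable {m k : Type*} [Fintype k]

theorem smul_self_mul_transpose_sub_add_eq (c : ℝ) (A B : Matrix m k ℝ) :
    c • (A * Aᵀ) - A * Bᵀ - B * Aᵀ + B * Bᵀ = (A - B) * (A - B)ᵀ + (c - 1) • (A * Aᵀ) := by
  simp only [transpose_sub, Matrix.sub_mul, Matrix.mul_sub, sub_smul, one_smul]
  abel

variable [Fintype m]

theorem posSemidef_self_mul_transpose (A : Matrix m k ℝ) : (A * Aᵀ).PosSemidef := by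
  simpa only [conjTranspose_eq_transpose_of_trivial] using posSemidef_self_mul_conjTranspose A

theorem posSemidef_smul_self_mul_transpose_sub_add {c : ℝ} (hc : 1 ≤ c) (A B : Matrix m k ℝ) :
    (c • (A * Aᵀ) - A * Bᵀ - B * Aᵀ + B * Bᵀ).PosSemidef := by
  rw [smul_self_mul_transpose_sub_add_eq]
  exact (posSemidef_self_mul_transpose _).add
    ((posSemidef_self_mul_transpose A).smul (sub_nonneg.mpr hc))

end Matrix

/-- Positive definiteness of the variational covariance parameter:
`C̃_x = C_x + N P̃ + N Ũ Ũᵀ - Ũ Uᵀ - U Ũᵀ + U Uᵀ` is symmetric positive definite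
when `C_x` is positive definite, `P̃` is positive semidefinite and `N ≥ 1`. -/
theorem stmt_18 {n N : ℕ} (hN : 1 ≤ N)
    (Cx : Matrix (Fin n) (Fin n) ℝ) (hCx : Cx.PosDef)
    (Ptil : Matrix (Fin n) (Fin n) ℝ) (hPtil : Ptil.PosSemidef)
    (Util U : Matrix (Fin n) (Fin N) ℝ) :
    (Cx + (N : ℝ) • Ptil + (N : ℝ) • (Util * Utilᵀ) - Util * Uᵀ - U * Utilᵀ +
      U * Uᵀ).PosDef := by
  have hcross := posSemidef_smul_self_mul_transpose_sub_add (c := N) (by exact_mod_cast hN) Util U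
  have hP : ((N : ℝ) • Ptil).PosSemidef := hPtil.smul N.cast_nonneg
  convert (hCx.add_posSemidef hP).add_posSemidef hcross using 1
  abel
end
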